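/- Let A be a (not necessarily associative) K-affgebra and σ : A → A an affine map satisfying σ(ab) = ⟨σ(a)b, σ(ab), aσ(b)⟩. Then the set Der_σ(A) of derivations along σ (affine endomorphisms X with Xσ = σX and X(ab) = ⟨X(a)b, σ(ab), aX(b)⟩) is closed under the pointwise heap operation and pointwise K-action of Aff(A), and the bracket [X,Y] := ⟨XY, YX, σ⟩ makes Der_σ(A) into a Lie affgebra: [X,Y] ∈ Der_σ(A), and [-,-] satisfies heap-antisymmetry and the heap Jacobi identity. -/
import Mathlib


universe u v

class AbHeap (H : Type v) where
  hp : H → H → H → H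
  hassoc : ∀ a b c d e : H, hp (hp a b c) d e = hp a b (hp c d e)
  hidr : ∀ a b : H, hp a b b = a
  hidl : ∀ a b : H, hp b b a = a
  hcomm : ∀ a b c : H, hp a b c = hp c b a

open AbHeap

class AffMod (K : Type u) [CommRing K] (A : Type v) extends AbHeap A where
  act : K → A → A → A
  act_hp : ∀ (α : K) (a b c d : A),
    act α a (hp b c d) = hp (act α a b) (act α a c) (act α a d)
  act_scalar_hp : ∀ (α β γ : K) (a b : A),
    act (α - β + γ) a b = hp (act α a b) (act β a b) (act γ a b)
  act_mul : ∀ (α β : K) (a b : A), act (α * β) a b = act α a (act β a b)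
  act_base : ∀ (α : K) (a b c : A), act α a b = hp (act α c b) (act α c a) a
  act_zero : ∀ a b : A, act (0 : K) a b = a
  act_one : ∀ a b : A, act (1 : K) a b = b

open AffMod

/-- A homomorphism of affine `K`-modules: a heap homomorphism preserving the action. -/
def IsAffHom (K : Type u) [CommRing K] {A : Type v} {B : Type v} [AffMod K A] [AffMod K B]
    (f : A → B) : Prop :=
  (∀ a b c : A, f (hp a b c) = hp (f a) (f b) (f c)) ∧
  (∀ (α : K) (a b : A), f (act α a b) = act α (f a) (f b))

/-- A (left) Lie bracket on an affine `K`-module: bi-affine, heap-antisymmetric,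
satisfying the heap Jacobi identity. -/
def IsLieBracket (K : Type u) [CommRing K] {A : Type v} [AffMod K A] (br : A → A → A) : Prop :=
  (∀ b : A, IsAffHom K (fun a => br a b)) ∧
  (∀ a : A, IsAffHom K (br a)) ∧
  (∀ a b : A, hp (br a b) (br a a) (br b a) = br b b) ∧
  (∀ a b c : A,
    hp (hp (br a (br b c)) (br a a) (br b (br c a))) (br b b) (br c (br a b)) = br c c)

/-- A derivation along `σ` on a (not necessarily associative) affgebra. -/
def IsDer (K : Type u) [CommRing K] {A : Type v} [AffMod K A]
    (mul : A → A → A) (σ : A → A) (X : A → A) : Prop :=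
  IsAffHom K X ∧ (∀ a : A, X (σ a) = σ (X a)) ∧
  (∀ a b : A, X (mul a b) = hp (mul (X a) b) (σ (mul a b)) (mul a (X b)))

/-- The bracket `[X,Y] = ⟨XY, YX, σ⟩` on derivations along `σ`. -/
def derBr {A : Type v} [AbHeap A] (σ X Y : A → A) : A → A :=
  fun a => hp (X (Y a)) (Y (X a)) (σ a)


/-- Any element of an abelian heap turns it into an abelian group. -/
def heapGroup {A : Type v} [AbHeap A] (o : A) : AddCommGroup A :=
  letI : Zero A := ⟨o⟩
  letI : Add A := ⟨fun a b => hp a o b⟩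
  letI : Neg A := ⟨fun a => hp o a o⟩
  { add := (· + ·)
    zero := 0
    neg := (- ·)
    nsmul := nsmulRec
    zsmul := zsmulRec
    add_assoc := fun a b c => hassoc a o b o c
    zero_add := fun a => hidl a o
    add_zero := fun a => hidr a o
    neg_add_cancel := fun a => by
      show hp (hp o a o) o a = o
      rw [hassoc, hidl, hidr]
    add_comm := fun a b => hcomm a o b }

/-- The translation-type map `b ↦ α ▷_o b`. -/
def tr {K : Type u} [CommRing K] {A : Type v} [AffMod K A] (α : K) (o b : A) : A :=
  act α o b

/-- `Der_σ(A)` is closed under the pointwise heap operation and action, is closed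
under `[X,Y] = ⟨XY, YX, σ⟩`, and this bracket satisfies heap-antisymmetry and the
heap Jacobi identity. -/
theorem stmt15 {K : Type u} [CommRing K] {A : Type v} [AffMod K A]
    (mul : A → A → A)
    (hl : ∀ b : A, IsAffHom K (fun a => mul a b))
    (hr : ∀ a : A, IsAffHom K (mul a))
    (σ : A → A) (hσaff : IsAffHom K σ)
    (hσ : ∀ a b : A, σ (mul a b) = hp (mul (σ a) b) (σ (mul a b)) (mul a (σ b))) :
    (∀ X Y Z : A → A, IsDer K mul σ X → IsDer K mul σ Y → IsDer K mul σ Z →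
      IsDer K mul σ (fun a => hp (X a) (Y a) (Z a))) ∧
    (∀ (α : K) (X Y : A → A), IsDer K mul σ X → IsDer K mul σ Y →
      IsDer K mul σ (fun a => act α (X a) (Y a))) ∧
    (∀ X Y : A → A, IsDer K mul σ X → IsDer K mul σ Y →
      IsDer K mul σ (derBr σ X Y)) ∧
    (∀ X Y : A → A, IsDer K mul σ X → IsDer K mul σ Y →
      ∀ a : A, hp (derBr σ X Y a) (derBr σ X X a) (derBr σ Y X a) = derBr σ Y Y a) ∧
    (∀ X Y Z : A → A, IsDer K mul σ X → IsDer K mul σ Y → IsDer K mul σ Z →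
      ∀ a : A,
        hp (hp (derBr σ X (derBr σ Y Z) a) (derBr σ X X a) (derBr σ Y (derBr σ Z X) a))
          (derBr σ Y Y a) (derBr σ Z (derBr σ X Y) a) = derBr σ Z Z a) := by
  obtain hA | hA := isEmpty_or_nonempty A
  · simp [IsDer, IsAffHom, derBr]
  · obtain ⟨o⟩ := hA
    letI G : AddCommGroup A := heapGroup o
    have hpe : ∀ a b c : A, hp a b c = a - b + c := by
      intro a b c
      show hp a b c = hp (hp a o (hp o b o)) o c
      rw [← hassoc, hidr, hassoc, hidl]
    have act_oo : ∀ α : K, act α o o = o := by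
      intro α
      have h := act_base α o o o
      rw [hidl] at h
      exact h
    have acte : ∀ (α : K) (a b : A), act α a b = tr α o b - tr α o a + a := by
      intro α a b
      rw [act_base α a b o, hpe]
      rfl
    have tr_add : ∀ (α : K) (a b : A), tr α o (a + b) = tr α o a + tr α o b := by
      intro α a b
      show act α o (hp a o b) = hp (act α o a) o (act α o b)
      rw [act_hp, act_oo]
    have tr_neg : ∀ (α : K) (a : A), tr α o (-a) = -(tr α o a) := by
      intro α a
      show act α o (hp o a o) = hp o (act α o a) o
      rw [act_hp, act_oo]
    have tr_sub : ∀ (α : K) (a b : A), tr α o (a - b) = tr α o a - tr α o b := by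
      intro α a b
      rw [sub_eq_add_neg, sub_eq_add_neg, tr_add, tr_neg]
    have tr_tr : ∀ (α β : K) (a : A), tr α o (tr β o a) = tr (α * β) o a := by
      intro α β a
      exact (act_mul α β o a).symm
    have shp := hσaff.1
    have sact := hσaff.2
    have mulhpl : ∀ (x y z b : A), mul (hp x y z) b = hp (mul x b) (mul y b) (mul z b) :=
      fun x y z b => (hl b).1 x y z
    have mulactl : ∀ (β : K) (x y b : A), mul (act β x y) b = act β (mul x b) (mul y b) :=
      fun β x y b => (hl b).2 β x y
    have mulhpr : ∀ (a x y z : A), mul a (hp x y z) = hp (mul a x) (mul a y) (mul a z) :=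
      fun a x y z => (hr a).1 x y z
    have mulactr : ∀ (β : K) (a x y : A), mul a (act β x y) = act β (mul a x) (mul a y) :=
      fun β a x y => (hr a).2 β x y
    have eA : ∀ a b : A, mul (σ a) b = σ (mul a b) - mul a (σ b) + σ (mul a b) := by
      intro a b
      have e := hσ a b
      rw [hpe] at e
      have h2 : mul (σ a) b - (σ (mul a b) - mul a (σ b) + σ (mul a b)) =
          (mul (σ a) b - σ (mul a b) + mul a (σ b)) - σ (mul a b) := by abel
      rw [← e, sub_self] at h2
      exact sub_eq_zero.mp h2
    refine ⟨?_, ?_, ?_, ?_, ?_⟩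
    · intro X Y Z hX hY hZ
      obtain ⟨⟨Xhp, Xact⟩, Xs, Xmul⟩ := hX
      obtain ⟨⟨Yhp, Yact⟩, Ys, Ymul⟩ := hY
      obtain ⟨⟨Zhp, Zact⟩, Zs, Zmul⟩ := hZ
      refine ⟨⟨fun a b c => ?_, fun β a b => ?_⟩, fun a => ?_, fun a b => ?_⟩
      · simp only [Xhp, Yhp, Zhp]
        simp only [hpe]; abel
      · simp only [Xact, Yact, Zact]
        simp only [acte, hpe, tr_add, tr_sub, tr_neg]; abel
      · simp only [Xs, Ys, Zs, shp]
      · simp only [Xmul, Ymul, Zmul, mulhpl, mulhpr]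
        simp only [hpe]; abel
    · intro α X Y hX hY
      obtain ⟨⟨Xhp, Xact⟩, Xs, Xmul⟩ := hX
      obtain ⟨⟨Yhp, Yact⟩, Ys, Ymul⟩ := hY
      refine ⟨⟨fun a b c => ?_, fun β a b => ?_⟩, fun a => ?_, fun a b => ?_⟩
      · simp only [Xhp, Yhp]
        simp only [acte, hpe, tr_add, tr_sub, tr_neg]; abel
      · simp only [Xact, Yact]
        simp only [acte, hpe, tr_add, tr_sub, tr_neg, tr_tr]
        rw [mul_comm β α]
        abel
      · simp only [Xs, Ys, sact]
      · simp only [Xmul, Ymul, mulactl, mulactr]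
        simp only [acte, hpe, tr_add, tr_sub, tr_neg]; abel
    · intro X Y hX hY
      obtain ⟨⟨Xhp, Xact⟩, Xs, Xmul⟩ := hX
      obtain ⟨⟨Yhp, Yact⟩, Ys, Ymul⟩ := hY
      refine ⟨⟨fun a b c => ?_, fun β a b => ?_⟩, fun a => ?_, fun a b => ?_⟩
      · simp only [derBr, Xhp, Yhp, shp]
        simp only [hpe]; abel
      · simp only [derBr, Xact, Yact, sact]
        simp only [acte, hpe, tr_add, tr_sub, tr_neg]; abel
      · simp only [derBr, Xs, Ys, shp]
      · simp only [derBr, Xmul, Ymul, Xs, Ys, shp, Xhp, Yhp, mulhpl, mulhpr]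
        simp only [hpe]
        rw [eA a b]
        abel
    · intro X Y hX hY a
      simp only [derBr]
      simp only [hpe]; abel
    · intro X Y Z hX hY hZ a
      obtain ⟨⟨Xhp, Xact⟩, Xs, Xmul⟩ := hX
      obtain ⟨⟨Yhp, Yact⟩, Ys, Ymul⟩ := hY
      obtain ⟨⟨Zhp, Zact⟩, Zs, Zmul⟩ := hZ
      simp only [derBr, Xhp, Yhp, Zhp, Xs, Ys, Zs, shp]
      simp only [hpe]
      abel
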